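/- Let R: ℝ → ℝ be bounded with compact support, B a standard 1-dimensional Brownian motion, and X_n(t) = n^{−3/4} ∫₀^{nt} V(B_s) ds an additive functional whose second moment satisfies E[(X_n(t)−X_n(s))²] = n^{−3/2} ∫_{[0,n(t−s)]²} E[R(B_{u₁}−B_{u₂})] du₁ du₂. Then there is a constant C independent of n, s, t such that E[(X_n(t)−X_n(s))²] ≤ C (t−s)^{3/2} for all 0 ≤ s ≤ t ≤ 1. -/

import Mathlib

open MeasureTheory ProbabilityTheory

/-- The `d`-dimensional heat kernel at time `u`. -/
noncomputable def heatKernel (d : ℕ) (u : ℝ) (x : EuclideanSpace ℝ (Fin d)) : ℝ :=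
  (2 * Real.pi * u) ^ (-(d : ℝ) / 2) * Real.exp (-‖x‖ ^ 2 / (2 * u))

/-- `B` is a standard `d`-dimensional Brownian motion under `P`. -/
def IsStdBM {Ω : Type*} [MeasurableSpace Ω] (d : ℕ) (P : Measure Ω)
    (B : ℝ → Ω → EuclideanSpace ℝ (Fin d)) : Prop :=
  (∀ t, Measurable (B t)) ∧ (∀ ω, B 0 ω = 0) ∧
  (∀ s t : ℝ, 0 ≤ s → s < t →
    Measure.map (fun ω => B t ω - B s ω) P =
      volume.withDensity (fun x => ENNReal.ofReal (heatKernel d (t - s) x))) ∧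
  (∀ (m : ℕ) (τ : Fin (m + 1) → ℝ), Monotone τ → (∀ i, 0 ≤ τ i) →
    iIndepFun
      (fun i : Fin m => fun ω => B (τ i.succ) ω - B (τ i.castSucc) ω) P)

/-! The singularity on the diagonal is integrable in dimension one. The heat kernel at time `u`
is at most `(2πu)^{-1/2}`, so `|E R(B_{u₁} - B_{u₂})| ≤ (2π)^{-1/2} ‖R‖₁ |u₁ - u₂|^{-1/2}`, and
`∫₀^T |u - c|^{-1/2} du = 2(√c + √(T - c)) ≤ 4√T` for `c ∈ [0, T]`. Hence the double integral over
`[0, T]²` is at most `4 (2π)^{-1/2} ‖R‖₁ T^{3/2}`, and for `T = n(t - s)` the prefactor `n^{-3/2}`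
cancels the dependence on `n`. -/

open Set Real
open scoped Interval

section AbsSubRpow

open intervalIntegral

variable {r a b c : ℝ}

lemma eqOn_abs_sub_rpow_left (hac : a ≤ c) :
    EqOn (fun u => |u - c| ^ r) (fun u => (c - u) ^ r) [[a, c]] := by
  intro u hu
  rw [uIcc_of_le hac] at hu
  simp only [abs_sub_comm u c, abs_of_nonneg (sub_nonneg.2 hu.2)]

lemma eqOn_abs_sub_rpow_right (hcb : c ≤ b) :
    EqOn (fun u => |u - c| ^ r) (fun u => (u - c) ^ r) [[c, b]] := by
  intro u hu
  rw [uIcc_of_le hcb] at hu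
  simp only [abs_of_nonneg (sub_nonneg.2 hu.1)]

lemma intervalIntegrable_abs_sub_rpow (hr : -1 < r) (hac : a ≤ c) (hcb : c ≤ b) :
    IntervalIntegrable (fun u => |u - c| ^ r) volume a b := by
  have left : IntervalIntegrable (fun u => |u - c| ^ r) volume a c := by
    refine (intervalIntegrable_congr ((eqOn_abs_sub_rpow_left hac).mono
      uIoc_subset_uIcc)).2 ?_
    simpa using (intervalIntegrable_rpow' (a := c - a) (b := 0) hr).comp_sub_left c
  have right : IntervalIntegrable (fun u => |u - c| ^ r) volume c b := by
    refine (intervalIntegrable_congr ((eqOn_abs_sub_rpow_right hcb).mono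
      uIoc_subset_uIcc)).2 ?_
    simpa using (intervalIntegrable_rpow' (a := 0) (b := b - c) hr).comp_sub_right c
  exact left.trans right

lemma integral_abs_sub_rpow (hr : -1 < r) (hac : a ≤ c) (hcb : c ≤ b) :
    ∫ u in a..b, |u - c| ^ r = ((c - a) ^ (r + 1) + (b - c) ^ (r + 1)) / (r + 1) := by
  have hr0 : (0 : ℝ) ^ (r + 1) = 0 := zero_rpow (by linarith)
  rw [← integral_add_adjacent_intervals (intervalIntegrable_abs_sub_rpow hr hac le_rfl)
      (intervalIntegrable_abs_sub_rpow hr le_rfl hcb),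
    integral_congr (eqOn_abs_sub_rpow_left hac), integral_congr (eqOn_abs_sub_rpow_right hcb),
    integral_comp_sub_left (fun x => x ^ r), integral_comp_sub_right (fun x => x ^ r),
    integral_rpow (Or.inl hr), integral_rpow (Or.inl hr)]
  simp only [sub_self, hr0]
  ring

end AbsSubRpow

lemma heatKernel_nonneg (d : ℕ) {u : ℝ} (hu : 0 ≤ u) (x : EuclideanSpace ℝ (Fin d)) :
    0 ≤ heatKernel d u x := by
  unfold heatKernel
  positivity

lemma heatKernel_le (d : ℕ) {u : ℝ} (hu : 0 ≤ u) (x : EuclideanSpace ℝ (Fin d)) :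
    heatKernel d u x ≤ (2 * π * u) ^ (-(d : ℝ) / 2) := by
  have hexp : rexp (-‖x‖ ^ 2 / (2 * u)) ≤ 1 :=
    exp_le_one_iff.2 (div_nonpos_of_nonpos_of_nonneg (neg_nonpos.2 (by positivity))
      (by positivity))
  exact mul_le_of_le_one_right (by positivity) hexp

namespace IsStdBM

variable {Ω : Type*} [MeasurableSpace Ω] {d : ℕ} {P : Measure Ω}
  {B : ℝ → Ω → EuclideanSpace ℝ (Fin d)} {f : EuclideanSpace ℝ (Fin d) → ℝ}

lemma integral_comp_increment (hB : IsStdBM d P B) {s t : ℝ} (hs : 0 ≤ s) (hst : s < t)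
    (hf : AEStronglyMeasurable f volume) :
    ∫ ω, f (B t ω - B s ω) ∂P = ∫ x, heatKernel d (t - s) x * f x := by
  have hlaw := hB.2.2.1 s t hs hst
  have hkernel : Measurable fun x => ENNReal.ofReal (heatKernel d (t - s) x) := by
    unfold heatKernel
    fun_prop
  have hincr : AEMeasurable (fun ω => B t ω - B s ω) P := ((hB.1 t).sub (hB.1 s)).aemeasurable
  rw [← integral_map hincr (hlaw ▸ hf.mono_ac (withDensity_absolutelyContinuous _ _)), hlaw,
    integral_withDensity_eq_integral_toReal_smul hkernel
      (ae_of_all _ fun _ => ENNReal.ofReal_lt_top)]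
  simp only [ENNReal.toReal_ofReal (heatKernel_nonneg d (sub_nonneg.2 hst.le) _), smul_eq_mul]

lemma abs_integral_comp_increment_le (hB : IsStdBM d P B) {s t : ℝ} (hs : 0 ≤ s) (hst : s < t)
    (hf : Integrable f) :
    |∫ ω, f (B t ω - B s ω) ∂P| ≤ (2 * π * (t - s)) ^ (-(d : ℝ) / 2) * ∫ x, |f x| := by
  have hts : 0 ≤ t - s := sub_nonneg.2 hst.le
  rw [integral_comp_increment hB hs hst hf.1, ← MeasureTheory.integral_const_mul]
  refine (abs_integral_le_integral_abs).trans (integral_mono_of_nonneg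
    (ae_of_all _ fun _ => abs_nonneg _) (hf.abs.const_mul _) (ae_of_all _ fun x => ?_))
  simp only [abs_mul, abs_of_nonneg (heatKernel_nonneg d hts x)]
  exact mul_le_mul_of_nonneg_right (heatKernel_le d hts x) (abs_nonneg _)

lemma abs_integral_comp_sub_le (hB : IsStdBM d P B) {a b : ℝ} (ha : 0 ≤ a) (hb : 0 ≤ b)
    (hab : a ≠ b) (hf : Integrable f) :
    |∫ ω, f (B a ω - B b ω) ∂P| ≤ (2 * π * |a - b|) ^ (-(d : ℝ) / 2) * ∫ x, |f x| := by
  rcases hab.lt_or_gt with hlt | hgt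
  · have := abs_integral_comp_increment_le hB ha hlt hf.comp_neg
    simp only [neg_sub, integral_neg_eq_self (fun x => |f x|)] at this
    rwa [abs_sub_comm, abs_of_pos (sub_pos.2 hlt)]
  · simpa [abs_of_pos (sub_pos.2 hgt)] using abs_integral_comp_increment_le hB hb hgt hf

end IsStdBM

section

variable {Ω : Type*} [MeasurableSpace Ω] {P : Measure Ω}
  {B : ℝ → Ω → EuclideanSpace ℝ (Fin 1)} {f : EuclideanSpace ℝ (Fin 1) → ℝ}

lemma IsStdBM.abs_integral_integral_comp_sub_le (hB : IsStdBM 1 P B) (hf : Integrable f)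
    {T : ℝ} (hT : 0 ≤ T) :
    |∫ u₁ in (0 : ℝ)..T, ∫ u₂ in (0 : ℝ)..T, ∫ ω, f (B u₁ ω - B u₂ ω) ∂P|
      ≤ 4 * ((2 * π) ^ (-(1 : ℝ) / 2) * ∫ x, |f x|) * T ^ ((3 : ℝ) / 2) := by
  set K := (2 * π) ^ (-(1 : ℝ) / 2) * ∫ x, |f x|
  have hK : 0 ≤ K := by positivity
  have hr : (-1 : ℝ) < -1 / 2 := by norm_num
  have inner : ∀ u₁ ∈ Ι (0 : ℝ) T,
      ‖∫ u₂ in (0 : ℝ)..T, ∫ ω, f (B u₁ ω - B u₂ ω) ∂P‖ ≤ K * (4 * T ^ ((1 : ℝ) / 2)) := by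
    intro u₁ hu₁
    rw [uIoc_of_le hT] at hu₁
    have hpointwise : ∀ᵐ u₂ ∂volume, u₂ ∈ Ioc 0 T →
        ‖∫ ω, f (B u₁ ω - B u₂ ω) ∂P‖ ≤ K * |u₂ - u₁| ^ (-(1 : ℝ) / 2) := by
      filter_upwards [Measure.ae_ne volume u₁] with u₂ hne hu₂
      have := hB.abs_integral_comp_sub_le hu₁.1.le hu₂.1.le hne.symm hf
      rwa [Nat.cast_one, mul_rpow (by positivity) (abs_nonneg _), abs_sub_comm,
        mul_right_comm] at this
    calc ‖∫ u₂ in (0 : ℝ)..T, ∫ ω, f (B u₁ ω - B u₂ ω) ∂P‖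
        ≤ ∫ u₂ in (0 : ℝ)..T, K * |u₂ - u₁| ^ (-(1 : ℝ) / 2) :=
          intervalIntegral.norm_integral_le_of_norm_le hT hpointwise
            ((intervalIntegrable_abs_sub_rpow hr hu₁.1.le hu₁.2).const_mul K)
      _ = K * (2 * (u₁ ^ ((1 : ℝ) / 2) + (T - u₁) ^ ((1 : ℝ) / 2))) := by
          rw [intervalIntegral.integral_const_mul, integral_abs_sub_rpow hr hu₁.1.le hu₁.2,
            sub_zero, show (-1 : ℝ) / 2 + 1 = 1 / 2 by norm_num]
          ring
      _ ≤ K * (4 * T ^ ((1 : ℝ) / 2)) := by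
          have h₁ : u₁ ^ ((1 : ℝ) / 2) ≤ T ^ ((1 : ℝ) / 2) :=
            rpow_le_rpow hu₁.1.le hu₁.2 (by norm_num)
          have h₂ : (T - u₁) ^ ((1 : ℝ) / 2) ≤ T ^ ((1 : ℝ) / 2) :=
            rpow_le_rpow (by linarith [hu₁.2]) (by linarith [hu₁.1]) (by norm_num)
          exact mul_le_mul_of_nonneg_left (by linarith) hK
  calc |∫ u₁ in (0 : ℝ)..T, ∫ u₂ in (0 : ℝ)..T, ∫ ω, f (B u₁ ω - B u₂ ω) ∂P|
      ≤ K * (4 * T ^ ((1 : ℝ) / 2)) * |T - 0| :=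
        intervalIntegral.norm_integral_le_of_norm_le_const inner
    _ = 4 * K * T ^ ((3 : ℝ) / 2) := by
        rw [sub_zero, abs_of_nonneg hT, show (3 : ℝ) / 2 = 1 / 2 + 1 by norm_num,
          rpow_add_one' hT (by norm_num)]
        ring

end

theorem stmt16_general {Ω : Type*} [MeasurableSpace Ω] (P : Measure Ω)
    (B : ℝ → Ω → EuclideanSpace ℝ (Fin 1)) (hB : IsStdBM 1 P B)
    (R : EuclideanSpace ℝ (Fin 1) → ℝ) (hRmeas : Measurable R)
    (hRbdd : ∃ K, ∀ x, |R x| ≤ K) (hRsupp : HasCompactSupport R)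
    (X : ℕ → ℝ → Ω → ℝ)
    (hX : ∀ n : ℕ, 1 ≤ n → ∀ s t : ℝ, 0 ≤ s → s ≤ t → t ≤ 1 →
      (∫ ω, (X n t ω - X n s ω) ^ 2 ∂P)
        = (n : ℝ) ^ (-(3 : ℝ) / 2) *
          ∫ u₁ in (0:ℝ)..((n : ℝ) * (t - s)), ∫ u₂ in (0:ℝ)..((n : ℝ) * (t - s)),
            ∫ ω, R (B u₁ ω - B u₂ ω) ∂P) :
    ∃ C : ℝ, ∀ n : ℕ, 1 ≤ n → ∀ s t : ℝ, 0 ≤ s → s ≤ t → t ≤ 1 →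
      (∫ ω, (X n t ω - X n s ω) ^ 2 ∂P) ≤ C * (t - s) ^ ((3 : ℝ) / 2) := by
  obtain ⟨K, hK⟩ := hRbdd
  have hRint : Integrable R :=
    memLp_one_iff_integrable.1 <| hRsupp.memLp_of_bound hRmeas.aestronglyMeasurable K
      (ae_of_all _ hK)
  set C := 4 * ((2 * π) ^ (-(1 : ℝ) / 2) * ∫ x, |R x|)
  refine ⟨C, fun n hn s t hs hst ht1 => ?_⟩
  have hn0 : (0 : ℝ) < n := by exact_mod_cast hn
  have hts : 0 ≤ t - s := sub_nonneg.2 hst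
  rw [hX n hn s t hs hst ht1]
  calc (n : ℝ) ^ (-(3 : ℝ) / 2) * ∫ u₁ in (0 : ℝ)..n * (t - s), ∫ u₂ in (0 : ℝ)..n * (t - s),
        ∫ ω, R (B u₁ ω - B u₂ ω) ∂P
      ≤ (n : ℝ) ^ (-(3 : ℝ) / 2) * (C * (n * (t - s)) ^ ((3 : ℝ) / 2)) := by
        gcongr
        exact (le_abs_self _).trans
          (hB.abs_integral_integral_comp_sub_le hRint (mul_nonneg hn0.le hts))
    _ = C * (t - s) ^ ((3 : ℝ) / 2) := by
        rw [mul_rpow hn0.le hts, neg_div, rpow_neg hn0.le]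
        field_simp

/-- Tightness second-moment estimate in dimension one: if
`E[(X_n(t) - X_n(s))²] = n^{-3/2} ∫_{[0,n(t-s)]²} E[R(B_{u₁} - B_{u₂})] du₁ du₂` with `R`
bounded of compact support, then `E[(X_n(t) - X_n(s))²] ≤ C (t-s)^{3/2}` uniformly in `n`. -/
theorem stmt16 {Ω : Type*} [MeasurableSpace Ω] (P : Measure Ω) [IsProbabilityMeasure P]
    (B : ℝ → Ω → EuclideanSpace ℝ (Fin 1)) (hB : IsStdBM 1 P B)
    (R : EuclideanSpace ℝ (Fin 1) → ℝ) (hRmeas : Measurable R)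
    (hRbdd : ∃ K, ∀ x, |R x| ≤ K) (hRsupp : HasCompactSupport R)
    (X : ℕ → ℝ → Ω → ℝ)
    (hX : ∀ n : ℕ, 1 ≤ n → ∀ s t : ℝ, 0 ≤ s → s ≤ t → t ≤ 1 →
      (∫ ω, (X n t ω - X n s ω) ^ 2 ∂P)
        = (n : ℝ) ^ (-(3 : ℝ) / 2) *
          ∫ u₁ in (0:ℝ)..((n : ℝ) * (t - s)), ∫ u₂ in (0:ℝ)..((n : ℝ) * (t - s)),
            ∫ ω, R (B u₁ ω - B u₂ ω) ∂P) :
    ∃ C : ℝ, ∀ n : ℕ, 1 ≤ n → ∀ s t : ℝ, 0 ≤ s → s ≤ t → t ≤ 1 →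
      (∫ ω, (X n t ω - X n s ω) ^ 2 ∂P) ≤ C * (t - s) ^ ((3 : ℝ) / 2) :=
  stmt16_general P B hB R hRmeas hRbdd hRsupp X hX
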